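/- (Rank guarantee with unbounded valuations.) Suppose valuations take values in [0, ∞) (with v(∅) = 0, no upper bound v̄). Assume N ≥ |𝓜| + 1 and 2 ≤ k ≤ N, and let 𝔾 be a nonempty set of Borel probability measures on valuations such that E_G[v_b] < ∞ for every G ∈ 𝔾 and every bundle b; let 𝔽 = {F : F̄ ∈ 𝔾}. For G ∈ 𝔾 and a bundle b, let Q_b(G) = inf{ q ≥ 0 : G({v : v_b > q}) ≤ (k−1)/N } be the top-(k−1)/N quantile of v_b under G. Then inf_{F∈𝔽} E_F[Rᵏ_𝓜(v)] ≥ inf_{F∈𝔽} V_𝓜(F) − sup_{G∈𝔾} Σ_{b∈𝓜} ∫_{{v : v_b ≥ Q_b(G)}} v_b dG(v). -/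

import Mathlib

/-!
Fix a law `F` of valuation profiles with average marginal `G`. Giving all bidders one common
valuation `w ∼ G` yields a law in the class whose efficient surplus is at most `E_G[maxAlloc w]`,
so `E_G[maxAlloc w]` bounds `inf V` from above. On the other side, bidder `n`'s best allocation
under `v n` is covered by the `k`-th rank allocation plus, on each bundle `b`, a payment `Q_b`
when `v n b` beats the `k`-th highest bid (which happens for at most `k - 1` bidders) and the
excess `(v n b - Q_b)⁺`. Summing over bidders and using `G(Q_b ≤ w b) ≥ (k - 1) / N` gives
`E_G[maxAlloc w] ≤ E_F[R^k] + ∑_b ∫_{Q_b ≤ w b} w b dG`.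
-/

open MeasureTheory
open scoped ENNReal BigOperators

namespace RankGuaranteedAuctions

/-- A bundle of items, where the set of items is `Fin M`. -/
abbrev Bundle (M : ℕ) := Finset (Fin M)

/-- A valuation assigns a real value to every bundle. -/
abbrev Valuation (M : ℕ) := Bundle M → ℝ

/-- A valuation is normalized: value `0` for the empty bundle and values in `[0, vbar]`. -/
def IsValuation (M : ℕ) (vbar : ℝ) (v : Valuation M) : Prop :=
  v ∅ = 0 ∧ ∀ b : Bundle M, 0 ≤ v b ∧ v b ≤ vbar

/-- A menu is a nonempty collection of nonempty bundles. -/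
def IsMenu (M : ℕ) (Menu : Finset (Bundle M)) : Prop :=
  Menu.Nonempty ∧ ∅ ∉ Menu

/-- The complete menu `2^S` of all nonempty bundles. -/
noncomputable def completeMenu (M : ℕ) : Finset (Bundle M) :=
  Finset.univ.erase ∅

/-- A feasible allocation: a set of pairwise disjoint bundles from the menu. -/
def Feasible (M : ℕ) (Menu X : Finset (Bundle M)) : Prop :=
  X ⊆ Menu ∧ ∀ b ∈ X, ∀ b' ∈ X, b ≠ b' → Disjoint b b'

/-- The maximum of `∑ b ∈ X, f b` over feasible allocations `X` from the menu. -/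
noncomputable def maxAlloc (M : ℕ) (Menu : Finset (Bundle M)) (f : Bundle M → ℝ) : ℝ :=
  sSup {y : ℝ | ∃ X : Finset (Bundle M), Feasible M Menu X ∧ y = ∑ b ∈ X, f b}

/-- The `k`-th highest value among `w 0, …, w (N-1)` (for `1 ≤ k ≤ N`):
the maximum over sets `T` of `k` bidders of the minimum of `w` on `T`. -/
noncomputable def kthHighest (N : ℕ) (w : Fin N → ℝ) (k : ℕ) : ℝ :=
  sSup {x : ℝ | ∃ T : Finset (Fin N), T.card = k ∧ x = sInf (w '' (T : Set (Fin N)))}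

/-- The `k`-th rank guarantee `R^k_𝓜(v)`. -/
noncomputable def rankGuarantee (M N : ℕ) (Menu : Finset (Bundle M))
    (v : Fin N → Valuation M) (k : ℕ) : ℝ :=
  maxAlloc M Menu fun b => kthHighest N (fun n => v n b) k

/-- The ex-post efficient surplus: the maximum over feasible allocations `X` with
`|X| ≤ N` and injective assignments `ι` of bundles in `X` to bidders of the total value. -/
noncomputable def surplusEx (M N : ℕ) (Menu : Finset (Bundle M))
    (v : Fin N → Valuation M) : ℝ :=
  sSup {y : ℝ | ∃ X : Finset (Bundle M), Feasible M Menu X ∧ X.card ≤ N ∧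
    ∃ ι : Bundle M → Fin N, Set.InjOn ι ↑X ∧ y = ∑ b ∈ X, v (ι b) b}

/-- The average `F̄ = (1/N) ∑ₙ Fₙ` of the bidder-marginals of `F`. -/
noncomputable def avgMarginal (M N : ℕ) (F : Measure (Fin N → Valuation M)) :
    Measure (Valuation M) :=
  (N : ℝ≥0∞)⁻¹ • ∑ n : Fin N, F.map (fun v => v n)

/-- The ex-ante efficient surplus `V_𝓜(F)`. -/
noncomputable def Vsurplus (M N : ℕ) (Menu : Finset (Bundle M))
    (F : Measure (Fin N → Valuation M)) : ℝ :=
  ∫ v, surplusEx M N Menu v ∂F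

/-- A Borel probability measure on valuation profiles (supported on profiles of
valuations bounded by `vbar`). -/
def ProfileOK (M N : ℕ) (vbar : ℝ) (F : Measure (Fin N → Valuation M)) : Prop :=
  IsProbabilityMeasure F ∧ F {v | ∀ n, IsValuation M vbar (v n)} = 1

/-- A Borel probability measure on valuations (supported on valuations bounded by `vbar`). -/
def ValOK (M : ℕ) (vbar : ℝ) (G : Measure (Valuation M)) : Prop :=
  IsProbabilityMeasure G ∧ G {w | IsValuation M vbar w} = 1

/-- `κ` is a partition of the bundle `b` into nonempty, pairwise disjoint parts. -/
def IsPartitionOf (M : ℕ) (κ : Finset (Bundle M)) (b : Bundle M) : Prop :=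
  (∀ c ∈ κ, c ≠ ∅) ∧ (∀ c ∈ κ, ∀ c' ∈ κ, c ≠ c' → Disjoint c c') ∧ κ.sup id = b

/-- Feasibility for homogeneous goods: total number of allocated items is at most `M`. -/
def FeasibleQ (M : ℕ) (Menu X : Finset (Bundle M)) : Prop :=
  X ⊆ Menu ∧ ∑ b ∈ X, b.card ≤ M

/-- The maximum of `∑ b ∈ X, f b` over homogeneous-goods-feasible allocations `X`. -/
noncomputable def maxAllocQ (M : ℕ) (Menu : Finset (Bundle M)) (f : Bundle M → ℝ) : ℝ :=
  sSup {y : ℝ | ∃ X : Finset (Bundle M), FeasibleQ M Menu X ∧ y = ∑ b ∈ X, f b}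

/-- An assignment of pairwise disjoint bundles to the `N` bidders. -/
def IsAssignment (M N : ℕ) (a : Fin N → Bundle M) : Prop :=
  ∀ n n' : Fin N, n ≠ n' → Disjoint (a n) (a n')

/-- An assignment is efficient if it maximizes total value over all assignments. -/
def IsEfficient (M N : ℕ) (v : Fin N → Valuation M) (a : Fin N → Bundle M) : Prop :=
  IsAssignment M N a ∧
    ∀ a' : Fin N → Bundle M, IsAssignment M N a' → ∑ n, v n (a' n) ≤ ∑ n, v n (a n)

/-- The VCG revenue at the efficient assignment `a`: the sum over bidders `n` of
`max_{assignments to bidders other than n} ∑_{n' ≠ n} v^{n'} − ∑_{n' ≠ n} v^{n'}(a n')`. -/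
noncomputable def vcgRevenue (M N : ℕ) (v : Fin N → Valuation M)
    (a : Fin N → Bundle M) : ℝ :=
  ∑ n : Fin N,
    (sSup {y : ℝ | ∃ a' : Fin N → Bundle M, IsAssignment M N a' ∧ a' n = ∅ ∧
        y = ∑ n' ∈ Finset.univ.erase n, v n' (a' n')}
      - ∑ n' ∈ Finset.univ.erase n, v n' (a n'))

/-- An unbounded valuation: value `0` for the empty bundle and nonnegative values. -/
def IsValuationNN (M : ℕ) (v : Valuation M) : Prop :=
  v ∅ = 0 ∧ ∀ b : Bundle M, 0 ≤ v b

/-- The top-`(k-1)/N` quantile of `v b` under `G`. -/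
noncomputable def quantileQ (M N k : ℕ) (G : Measure (Valuation M)) (b : Bundle M) : ℝ :=
  sInf {q : ℝ | 0 ≤ q ∧ G {w | q < w b} ≤ ((k - 1 : ℕ) : ℝ≥0∞) / (N : ℝ≥0∞)}

section FiniteSup

variable {α δ : Type*} [Finite α] [MeasurableSpace δ]

theorem measurable_csSup_image {S : Set α} {f : α → δ → ℝ}
    (hf : ∀ x ∈ S, Measurable (f x)) :
    Measurable fun v => sSup ((fun x => f x v) '' S) := by
  rcases S.eq_empty_or_nonempty with rfl | hS
  · simp only [Set.image_empty]
    exact measurable_const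
  · have hS' : (Set.toFinite S).toFinset.Nonempty := by simpa using hS
    convert Finset.measurable_sup' hS' (f := f) (by simpa using hf) using 1
    ext v
    rw [Finset.sup'_apply, Finset.sup'_eq_csSup_image, Set.Finite.coe_toFinset]

theorem measurable_csInf_image {S : Set α} {f : α → δ → ℝ}
    (hf : ∀ x ∈ S, Measurable (f x)) :
    Measurable fun v => sInf ((fun x => f x v) '' S) := by
  rcases S.eq_empty_or_nonempty with rfl | hS
  · simp only [Set.image_empty]
    exact measurable_const
  · have hS' : (Set.toFinite S).toFinset.Nonempty := by simpa using hS
    convert Finset.inf'_induction hS' f (p := Measurable) (fun _ hf _ hg => hf.inf hg)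
      (by simpa using hf) using 1
    ext v
    rw [Finset.inf'_apply, Finset.inf'_eq_csInf_image, Set.Finite.coe_toFinset]

end FiniteSup

theorem ae_of_subset_of_measure_eq_one {α : Type*} [MeasurableSpace α] {μ : Measure α}
    [IsProbabilityMeasure μ] {p : α → Prop} {s : Set α} (hp : MeasurableSet {x | p x})
    (hst : s ⊆ {x | p x}) (hs : μ s = 1) : ∀ᵐ x ∂μ, p x :=
  (ae_iff_measure_eq hp.nullMeasurableSet).2 <| by
    rw [measure_univ]
    exact le_antisymm prob_le_one (hs ▸ measure_mono hst)

theorem integral_max_sub_const_zero {α : Type*} [MeasurableSpace α] {μ : Measure α}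
    [IsFiniteMeasure μ] {X : α → ℝ} (hXm : Measurable X) (hX : Integrable X μ) (c : ℝ) :
    ∫ x, max (X x - c) 0 ∂μ =
      ∫ x in {x | c ≤ X x}, X x ∂μ - μ.real {x | c ≤ X x} * c := by
  have hS : MeasurableSet {x | c ≤ X x} := measurableSet_le measurable_const hXm
  have hmax : (fun x => max (X x - c) 0) = {x | c ≤ X x}.indicator fun x => X x - c := by
    ext x
    by_cases h : c ≤ X x
    · simp [h]
    · simp [h, (not_le.1 h).le]
  rw [hmax, integral_indicator hS, integral_sub hX.integrableOn (integrable_const c),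
    setIntegral_const, smul_eq_mul]

section Allocation

variable {M : ℕ} {Menu : Finset (Bundle M)}

theorem feasible_empty : Feasible M Menu ∅ :=
  ⟨Finset.empty_subset _, by simp⟩

theorem maxAlloc_eq_sSup_image (f : Bundle M → ℝ) :
    maxAlloc M Menu f = sSup ((fun X => ∑ b ∈ X, f b) '' {X | Feasible M Menu X}) := by
  simp only [maxAlloc, Set.image, Set.mem_ofPred_eq, eq_comm]

theorem le_maxAlloc (f : Bundle M → ℝ) {X : Finset (Bundle M)} (hX : Feasible M Menu X) :
    ∑ b ∈ X, f b ≤ maxAlloc M Menu f := by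
  rw [maxAlloc_eq_sSup_image]
  exact le_csSup (Set.toFinite _).bddAbove ⟨X, hX, rfl⟩

theorem maxAlloc_le {f : Bundle M → ℝ} {c : ℝ}
    (h : ∀ X, Feasible M Menu X → ∑ b ∈ X, f b ≤ c) : maxAlloc M Menu f ≤ c := by
  rw [maxAlloc_eq_sSup_image]
  exact csSup_le ⟨_, ∅, feasible_empty, rfl⟩ (Set.forall_mem_image.2 h)

theorem maxAlloc_nonneg (f : Bundle M → ℝ) : 0 ≤ maxAlloc M Menu f := by
  simpa using le_maxAlloc f (feasible_empty (Menu := Menu))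

theorem abs_maxAlloc_le (f : Bundle M → ℝ) : |maxAlloc M Menu f| ≤ ∑ b ∈ Menu, |f b| := by
  rw [abs_of_nonneg (maxAlloc_nonneg f)]
  refine maxAlloc_le fun X hX => ?_
  calc ∑ b ∈ X, f b ≤ ∑ b ∈ X, |f b| := Finset.sum_le_sum fun b _ => le_abs_self _
    _ ≤ ∑ b ∈ Menu, |f b| :=
      Finset.sum_le_sum_of_subset_of_nonneg hX.1 fun _ _ _ => abs_nonneg _

theorem measurable_maxAlloc_comp {δ : Type*} [MeasurableSpace δ] {f : δ → Valuation M}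
    (hf : Measurable f) : Measurable fun x => maxAlloc M Menu (f x) := by
  simp only [maxAlloc_eq_sSup_image]
  exact measurable_csSup_image fun X _ =>
    Finset.measurable_sum _ fun b _ => (measurable_pi_apply b).comp hf

end Allocation

section KthHighest

variable {N k : ℕ}

theorem kthHighest_eq_sSup_image (w : Fin N → ℝ) :
    kthHighest N w k = sSup ((fun T : Finset (Fin N) => sInf (w '' T)) '' {T | T.card = k}) := by
  simp only [kthHighest, Set.image, Set.mem_ofPred_eq, eq_comm]

theorem exists_kthHighest_eq (hk : 1 ≤ k) (hkN : k ≤ N) (w : Fin N → ℝ) :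
    ∃ n, kthHighest N w k = w n := by
  obtain ⟨T₀, -, hT₀⟩ :=
    Finset.exists_subset_card_eq (s := (Finset.univ : Finset (Fin N))) (by simpa using hkN)
  obtain ⟨T, hT, hTeq⟩ :=
    (Set.Nonempty.image (fun T : Finset (Fin N) => sInf (w '' T)) (s := {T | T.card = k})
      ⟨T₀, hT₀⟩).csSup_mem (Set.toFinite _)
  have hTk : T.card = k := hT
  have hTne : (T : Set (Fin N)).Nonempty := Finset.coe_nonempty.2 (Finset.card_pos.1 (by omega))
  obtain ⟨n, -, hn⟩ := (hTne.image w).csInf_mem (Set.toFinite _)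
  rw [kthHighest_eq_sSup_image, ← hTeq]
  exact ⟨n, hn.symm⟩

theorem card_lt_kthHighest_le (hk : 1 ≤ k) (w : Fin N → ℝ) :
    (Finset.univ.filter fun n => kthHighest N w k < w n).card ≤ k - 1 := by
  by_contra! h
  obtain ⟨T, hTsub, hT⟩ := Finset.exists_subset_card_eq
    (s := Finset.univ.filter fun n => kthHighest N w k < w n) (n := k) (by omega)
  have hTne : (T : Set (Fin N)).Nonempty := Finset.coe_nonempty.2 (Finset.card_pos.1 (by omega))
  obtain ⟨n, hn, hnT⟩ := (hTne.image w).csInf_mem (Set.toFinite _)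
  have hle : sInf (w '' T) ≤ kthHighest N w k := by
    rw [kthHighest_eq_sSup_image]
    exact le_csSup (Set.toFinite _).bddAbove ⟨T, hT, rfl⟩
  have hlt := (Finset.mem_filter.1 (hTsub hn)).2
  linarith

theorem abs_kthHighest_le (hk : 1 ≤ k) (hkN : k ≤ N) (w : Fin N → ℝ) :
    |kthHighest N w k| ≤ ∑ n, |w n| := by
  obtain ⟨n, hn⟩ := exists_kthHighest_eq hk hkN w
  rw [hn]
  exact Finset.single_le_sum (f := fun n => |w n|) (fun _ _ => abs_nonneg _) (Finset.mem_univ n)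

theorem measurable_kthHighest_comp {δ : Type*} [MeasurableSpace δ] {f : δ → Fin N → ℝ}
    (hf : Measurable f) : Measurable fun x => kthHighest N (f x) k := by
  simp only [kthHighest_eq_sSup_image]
  exact measurable_csSup_image fun T _ =>
    measurable_csInf_image fun n _ => (measurable_pi_apply n).comp hf

end KthHighest

section Surplus

variable {M N k : ℕ} {Menu : Finset (Bundle M)}

theorem measurable_rankGuarantee :
    Measurable fun v : Fin N → Valuation M => rankGuarantee M N Menu v k :=
  measurable_maxAlloc_comp <| measurable_pi_lambda _ fun b =>
    measurable_kthHighest_comp <| measurable_pi_lambda _ fun n =>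
      (measurable_pi_apply b).comp (measurable_pi_apply n)

theorem abs_rankGuarantee_le (hk : 1 ≤ k) (hkN : k ≤ N) (v : Fin N → Valuation M) :
    |rankGuarantee M N Menu v k| ≤ ∑ b ∈ Menu, ∑ n, |v n b| :=
  (abs_maxAlloc_le _).trans <| Finset.sum_le_sum fun _ _ =>
    abs_kthHighest_le hk hkN _

theorem surplusEx_eq_sSup_image (v : Fin N → Valuation M) :
    surplusEx M N Menu v = sSup ((fun p : Finset (Bundle M) × (Bundle M → Fin N) =>
      ∑ b ∈ p.1, v (p.2 b) b) ''
        {p | Feasible M Menu p.1 ∧ p.1.card ≤ N ∧ Set.InjOn p.2 p.1}) := by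
  unfold surplusEx
  congr 1
  ext y
  constructor
  · rintro ⟨X, hX, hcard, ι, hι, rfl⟩
    exact ⟨(X, ι), ⟨hX, hcard, hι⟩, rfl⟩
  · rintro ⟨⟨X, ι⟩, ⟨hX, hcard, hι⟩, rfl⟩
    exact ⟨X, hX, hcard, ι, hι, rfl⟩

theorem measurable_surplusEx :
    Measurable fun v : Fin N → Valuation M => surplusEx M N Menu v := by
  simp only [surplusEx_eq_sSup_image]
  exact measurable_csSup_image fun p _ => Finset.measurable_sum _ fun b _ =>
    (measurable_pi_apply b).comp (measurable_pi_apply (p.2 b))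

theorem surplusEx_nonneg (hN : 0 < N) (v : Fin N → Valuation M) : 0 ≤ surplusEx M N Menu v := by
  rw [surplusEx_eq_sSup_image]
  refine le_csSup_of_le (Set.toFinite _).bddAbove
    ⟨(∅, fun _ => ⟨0, hN⟩), ⟨feasible_empty, by simp, by simp⟩, rfl⟩ ?_
  simp

theorem surplusEx_const_le_maxAlloc (w : Valuation M) :
    surplusEx M N Menu (fun _ => w) ≤ maxAlloc M Menu w :=
  Real.sSup_le (by rintro _ ⟨X, hX, -, -, -, rfl⟩; exact le_maxAlloc w hX) (maxAlloc_nonneg w)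

end Surplus

section Marginal

variable {M N : ℕ}

theorem smul_avgMarginal (hN : N ≠ 0) (F : Measure (Fin N → Valuation M)) :
    (N : ℝ≥0∞) • avgMarginal M N F = ∑ n, F.map fun v => v n := by
  rw [avgMarginal, smul_smul,
    ENNReal.mul_inv_cancel (Nat.cast_ne_zero.2 hN) (ENNReal.natCast_ne_top N), one_smul]

theorem isProbabilityMeasure_avgMarginal (hN : N ≠ 0) (F : Measure (Fin N → Valuation M))
    [IsProbabilityMeasure F] : IsProbabilityMeasure (avgMarginal M N F) := by
  constructor
  simp [avgMarginal, Measure.map_apply (measurable_pi_apply _) MeasurableSet.univ,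
    ENNReal.inv_mul_cancel (Nat.cast_ne_zero.2 hN) (ENNReal.natCast_ne_top N)]

theorem integrable_map_eval_of_avgMarginal (hN : N ≠ 0) {F : Measure (Fin N → Valuation M)}
    {φ : Valuation M → ℝ} (hφ : Integrable φ (avgMarginal M N F)) (n : Fin N) :
    Integrable φ (F.map fun v => v n) := by
  refine (hφ.smul_measure (ENNReal.natCast_ne_top N)).mono_measure ?_
  rw [smul_avgMarginal hN, ← Measure.sum_fintype]
  exact Measure.le_sum _ n

theorem integrable_comp_eval_of_avgMarginal (hN : N ≠ 0) {F : Measure (Fin N → Valuation M)}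
    {φ : Valuation M → ℝ} (hφ : Integrable φ (avgMarginal M N F)) (n : Fin N) :
    Integrable (fun v => φ (v n)) F :=
  have h := integrable_map_eval_of_avgMarginal hN hφ n
  (integrable_map_measure h.aestronglyMeasurable (measurable_pi_apply n).aemeasurable).1 h

theorem sum_integral_comp_eval (hN : N ≠ 0) {F : Measure (Fin N → Valuation M)}
    {φ : Valuation M → ℝ} (hφ : Integrable φ (avgMarginal M N F)) :
    ∑ n, ∫ v, φ (v n) ∂F = N * ∫ w, φ w ∂avgMarginal M N F := by
  have hmap := integrable_map_eval_of_avgMarginal hN hφ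
  calc ∑ n, ∫ v, φ (v n) ∂F = ∑ n, ∫ w, φ w ∂(F.map fun v => v n) :=
        Finset.sum_congr rfl fun n _ =>
          (integral_map (measurable_pi_apply n).aemeasurable (hmap n).aestronglyMeasurable).symm
    _ = ∫ w, φ w ∂((N : ℝ≥0∞) • avgMarginal M N F) := by
        rw [smul_avgMarginal hN, integral_finsetSum_measure fun n _ => hmap n]
    _ = N * ∫ w, φ w ∂avgMarginal M N F := by simp [integral_smul_measure]

end Marginal

def profileClass (M N : ℕ) (GG : Set (Measure (Valuation M))) :
    Set (Measure (Fin N → Valuation M)) :=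
  {F | (IsProbabilityMeasure F ∧ F {v | ∀ n, IsValuationNN M (v n)} = 1) ∧
    avgMarginal M N F ∈ GG}

section ConstProfile

variable {M N : ℕ}

theorem measurable_const_profile : Measurable fun (w : Valuation M) (_ : Fin N) => w :=
  measurable_pi_lambda _ fun _ => measurable_id

theorem avgMarginal_map_const_profile (hN : N ≠ 0) (G : Measure (Valuation M)) :
    avgMarginal M N (G.map fun w (_ : Fin N) => w) = G := by
  have hmap (n : Fin N) : (G.map fun w (_ : Fin N) => w).map (fun v => v n) = G := by
    rw [Measure.map_map (measurable_pi_apply n) measurable_const_profile]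
    exact Measure.map_id
  simp only [avgMarginal, hmap, Finset.sum_const, Finset.card_univ, Fintype.card_fin,
    ← Nat.cast_smul_eq_nsmul ℝ≥0∞, smul_smul]
  rw [ENNReal.inv_mul_cancel (Nat.cast_ne_zero.2 hN) (ENNReal.natCast_ne_top N), one_smul]

theorem map_const_profile_nonneg (G : Measure (Valuation M)) [IsProbabilityMeasure G]
    (hG : G {w | IsValuationNN M w} = 1) :
    (G.map fun w (_ : Fin N) => w) {v | ∀ n, IsValuationNN M (v n)} = 1 := by
  have := Measure.isProbabilityMeasure_map (μ := G)
    (measurable_const_profile (N := N)).aemeasurable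
  refine le_antisymm prob_le_one ?_
  calc 1 = G {w | IsValuationNN M w} := hG.symm
    _ ≤ _ := (measure_mono fun w hw _ => hw).trans
        (Measure.le_map_apply measurable_const_profile.aemeasurable _)

theorem map_const_profile_mem_profileClass (hN : N ≠ 0) {GG : Set (Measure (Valuation M))}
    (hGG : ∀ G ∈ GG, IsProbabilityMeasure G ∧ G {w | IsValuationNN M w} = 1)
    {G : Measure (Valuation M)} (hG : G ∈ GG) :
    (G.map fun w (_ : Fin N) => w) ∈ profileClass M N GG := by
  obtain ⟨hGprob, hGsupp⟩ := hGG G hG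
  exact ⟨⟨Measure.isProbabilityMeasure_map measurable_const_profile.aemeasurable,
    map_const_profile_nonneg G hGsupp⟩, by rwa [avgMarginal_map_const_profile hN]⟩

end ConstProfile

section Support

variable {M N : ℕ}

theorem ae_nonneg_of_measure_isValuationNN {G : Measure (Valuation M)} [IsProbabilityMeasure G]
    (hG : G {w | IsValuationNN M w} = 1) (b : Bundle M) : ∀ᵐ w ∂G, 0 ≤ w b :=
  ae_of_subset_of_measure_eq_one (measurableSet_le measurable_const (measurable_pi_apply b))
    (fun _ hw => hw.2 b) hG

theorem ae_nonneg_of_measure_forall_isValuationNN {F : Measure (Fin N → Valuation M)}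
    [IsProbabilityMeasure F] (hF : F {v | ∀ n, IsValuationNN M (v n)} = 1) :
    ∀ᵐ v ∂F, ∀ n b, 0 ≤ v n b :=
  ae_of_subset_of_measure_eq_one
    (by simp only [Set.ofPred_forall]; exact .iInter fun n => .iInter fun b =>
      measurableSet_le measurable_const ((measurable_pi_apply b).comp (measurable_pi_apply n)))
    (fun _ hv n b => (hv n).2 b) hF

end Support

section Integrability

variable {M N k : ℕ} {Menu : Finset (Bundle M)}

theorem integrable_maxAlloc {G : Measure (Valuation M)}
    (hG : ∀ b, Integrable (fun w : Valuation M => w b) G) :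
    Integrable (fun w => maxAlloc M Menu w) G :=
  (integrable_finsetSum Menu fun b _ => (hG b).abs).mono'
    (measurable_maxAlloc_comp measurable_id).aestronglyMeasurable
    (ae_of_all _ fun w => abs_maxAlloc_le w)

theorem integrable_rankGuarantee (hk : 1 ≤ k) (hkN : k ≤ N)
    {F : Measure (Fin N → Valuation M)}
    (hG : ∀ b, Integrable (fun w : Valuation M => w b) (avgMarginal M N F)) :
    Integrable (fun v => rankGuarantee M N Menu v k) F :=
  (integrable_finsetSum Menu fun b _ => integrable_finsetSum _ fun n _ =>
      (integrable_comp_eval_of_avgMarginal (by omega) (hG b) n).abs).mono'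
    measurable_rankGuarantee.aestronglyMeasurable
    (ae_of_all _ fun v => abs_rankGuarantee_le hk hkN v)

theorem bddBelow_image_Vsurplus (hN : 0 < N) (S : Set (Measure (Fin N → Valuation M))) :
    BddBelow ((fun F => Vsurplus M N Menu F) '' S) :=
  ⟨0, by rintro _ ⟨F, -, rfl⟩; exact integral_nonneg fun v => surplusEx_nonneg hN v⟩

theorem Vsurplus_map_const_profile_le (hN : 0 < N) {G : Measure (Valuation M)}
    (hG : ∀ b, Integrable (fun w : Valuation M => w b) G) :
    Vsurplus M N Menu (G.map fun w (_ : Fin N) => w) ≤ ∫ w, maxAlloc M Menu w ∂G := by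
  rw [Vsurplus, integral_map measurable_const_profile.aemeasurable
    measurable_surplusEx.aestronglyMeasurable]
  exact integral_mono_of_nonneg (ae_of_all _ fun w => surplusEx_nonneg hN _)
    (integrable_maxAlloc hG) (ae_of_all _ surplusEx_const_le_maxAlloc)

end Integrability

section KeyInequality

variable {M N k : ℕ} {Menu : Finset (Bundle M)}

theorem le_add_ite_add_max_sub {a h c : ℝ} (hh : 0 ≤ h) :
    a ≤ h + ((if h < a then c else 0) + max (a - c) 0) := by
  split_ifs <;> linarith [le_max_left (a - c) 0, le_max_right (a - c) 0]

theorem maxAlloc_le_rankGuarantee_add (hk : 1 ≤ k) (hkN : k ≤ N) (c : Bundle M → ℝ)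
    (hc : ∀ b, 0 ≤ c b) {v : Fin N → Valuation M} (hv : ∀ n b, 0 ≤ v n b) (n : Fin N) :
    maxAlloc M Menu (v n) ≤ rankGuarantee M N Menu v k + ∑ b ∈ Menu,
      ((if kthHighest N (fun m => v m b) k < v n b then c b else 0) + max (v n b - c b) 0) := by
  refine maxAlloc_le fun X hX => ?_
  have hkth (b : Bundle M) : 0 ≤ kthHighest N (fun m => v m b) k := by
    obtain ⟨m, hm⟩ := exists_kthHighest_eq hk hkN fun m => v m b
    exact hm ▸ hv m b
  calc ∑ b ∈ X, v n b
      ≤ ∑ b ∈ X, (kthHighest N (fun m => v m b) k +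
          ((if kthHighest N (fun m => v m b) k < v n b then c b else 0) + max (v n b - c b) 0)) :=
        Finset.sum_le_sum fun b _ => le_add_ite_add_max_sub (hkth b)
    _ ≤ _ := by
        rw [Finset.sum_add_distrib]
        refine add_le_add (le_maxAlloc _ hX)
          (Finset.sum_le_sum_of_subset_of_nonneg hX.1 fun b _ _ => ?_)
        exact add_nonneg (by split_ifs <;> simp [hc b]) (le_max_right _ _)

theorem sum_maxAlloc_le (hk : 1 ≤ k) (hkN : k ≤ N) {c : Bundle M → ℝ}
    (hc : ∀ b, 0 ≤ c b) {v : Fin N → Valuation M} (hv : ∀ n b, 0 ≤ v n b) :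
    ∑ n, maxAlloc M Menu (v n) ≤ N * rankGuarantee M N Menu v k +
      ∑ b ∈ Menu, ((k - 1 : ℕ) : ℝ) * c b + ∑ n, ∑ b ∈ Menu, max (v n b - c b) 0 := by
  have htop (b : Bundle M) :
      ∑ n, (if kthHighest N (fun m => v m b) k < v n b then c b else 0) ≤
        ((k - 1 : ℕ) : ℝ) * c b := by
    rw [← Finset.sum_filter, Finset.sum_const, nsmul_eq_mul]
    gcongr
    · exact hc b
    · exact_mod_cast card_lt_kthHighest_le hk _
  calc ∑ n, maxAlloc M Menu (v n)
      ≤ ∑ n, (rankGuarantee M N Menu v k + ∑ b ∈ Menu,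
          ((if kthHighest N (fun m => v m b) k < v n b then c b else 0) + max (v n b - c b) 0)) :=
        Finset.sum_le_sum fun n _ => maxAlloc_le_rankGuarantee_add hk hkN c hc hv n
    _ = N * rankGuarantee M N Menu v k +
          ∑ b ∈ Menu, ∑ n, (if kthHighest N (fun m => v m b) k < v n b then c b else 0) +
          ∑ n, ∑ b ∈ Menu, max (v n b - c b) 0 := by
        simp only [Finset.sum_add_distrib, Finset.sum_const, Finset.card_univ, Fintype.card_fin,
          nsmul_eq_mul, add_assoc]
        rw [Finset.sum_comm (s := Finset.univ)]
    _ ≤ _ := by gcongr with b; exact htop b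

theorem integral_maxAlloc_avgMarginal_le (hk : 1 ≤ k) (hkN : k ≤ N)
    {F : Measure (Fin N → Valuation M)} [IsProbabilityMeasure F]
    (hF : ∀ᵐ v ∂F, ∀ n b, 0 ≤ v n b)
    (hG : ∀ b, Integrable (fun w : Valuation M => w b) (avgMarginal M N F))
    {c : Bundle M → ℝ} (hc : ∀ b, 0 ≤ c b) :
    N * ∫ w, maxAlloc M Menu w ∂avgMarginal M N F ≤
      N * ∫ v, rankGuarantee M N Menu v k ∂F + ∑ b ∈ Menu, ((k - 1 : ℕ) : ℝ) * c b +
        N * ∫ w, ∑ b ∈ Menu, max (w b - c b) 0 ∂avgMarginal M N F := by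
  have hN : N ≠ 0 := by omega
  have := isProbabilityMeasure_avgMarginal hN F
  have hmax := integrable_maxAlloc (Menu := Menu) hG
  have hexcess : Integrable (fun w : Valuation M => ∑ b ∈ Menu, max (w b - c b) 0)
      (avgMarginal M N F) :=
    integrable_finsetSum _ fun b _ => ((hG b).sub (integrable_const _)).pos_part
  have hR := integrable_rankGuarantee (Menu := Menu) hk hkN hG
  have hRC : Integrable (fun v => (N : ℝ) * rankGuarantee M N Menu v k +
      ∑ b ∈ Menu, ((k - 1 : ℕ) : ℝ) * c b) F :=
    (hR.const_mul _).add (integrable_const _)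
  have hE : Integrable (fun v => ∑ n, ∑ b ∈ Menu, max (v n b - c b) 0) F :=
    integrable_finsetSum _ fun n _ => integrable_comp_eval_of_avgMarginal hN hexcess n
  calc N * ∫ w, maxAlloc M Menu w ∂avgMarginal M N F
      = ∫ v, ∑ n, maxAlloc M Menu (v n) ∂F := by
        rw [integral_finsetSum _ fun n _ => integrable_comp_eval_of_avgMarginal hN hmax n,
          sum_integral_comp_eval hN hmax]
    _ ≤ ∫ v, (N * rankGuarantee M N Menu v k + ∑ b ∈ Menu, ((k - 1 : ℕ) : ℝ) * c b +
          ∑ n, ∑ b ∈ Menu, max (v n b - c b) 0) ∂F :=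
        integral_mono_ae
          (integrable_finsetSum _ fun n _ => integrable_comp_eval_of_avgMarginal hN hmax n)
          (hRC.add hE)
          (hF.mono fun v hv => sum_maxAlloc_le hk hkN hc hv)
    _ = _ := by
        rw [integral_add hRC hE, integral_add (hR.const_mul _) (integrable_const _),
          integral_const_mul, integral_const,
          integral_finsetSum _ fun n _ => integrable_comp_eval_of_avgMarginal hN hexcess n,
          sum_integral_comp_eval hN hexcess]
        simp

end KeyInequality

section Quantile

variable {M N k : ℕ} {G : Measure (Valuation M)} {b : Bundle M}

theorem quantileQ_nonneg : 0 ≤ quantileQ M N k G b :=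
  Real.sInf_nonneg fun _ hq => hq.1

theorem le_measure_lt_of_lt_quantileQ [IsProbabilityMeasure G] (hkN : k ≤ N)
    (hG : ∀ᵐ w ∂G, 0 ≤ w b) {q : ℝ} (hq : q < quantileQ M N k G b) :
    ((k - 1 : ℕ) : ℝ≥0∞) / N ≤ G {w | q < w b} := by
  rcases lt_or_ge q 0 with hq0 | hq0
  · calc ((k - 1 : ℕ) : ℝ≥0∞) / N ≤ 1 :=
          ENNReal.div_le_of_le_mul (by rw [one_mul]; exact_mod_cast (by omega : k - 1 ≤ N))
      _ = G {w | q < w b} :=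
        ((prob_compl_eq_zero_iff (measurableSet_lt measurable_const (measurable_pi_apply b))).1
          (measure_mono_null (fun w hw => by
            simp only [Set.mem_compl_iff, Set.mem_ofPred_eq, not_lt, not_le] at hw ⊢
            linarith) (ae_iff.1 hG))).symm
  · by_contra! h
    exact hq.not_ge (csInf_le ⟨0, fun _ h => h.1⟩ ⟨hq0, h.le⟩)

theorem le_measure_quantileQ_le [IsProbabilityMeasure G] (hkN : k ≤ N)
    (hG : ∀ᵐ w ∂G, 0 ≤ w b) :
    ((k - 1 : ℕ) : ℝ≥0∞) / N ≤ G {w | quantileQ M N k G b ≤ w b} := by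
  set Q := quantileQ M N k G b
  have hiInter : ⋂ i : ℕ, {w : Valuation M | Q - 1 / (i + 1) < w b} = {w | Q ≤ w b} := by
    ext w
    simp only [Set.mem_iInter, Set.mem_ofPred_eq]
    refine ⟨fun h => le_of_forall_pos_lt_add fun ε hε => ?_, fun h i => ?_⟩
    · obtain ⟨i, hi⟩ := exists_nat_one_div_lt hε
      linarith [h i]
    · linarith [Nat.one_div_pos_of_nat (α := ℝ) (n := i)]
  have hanti : Antitone fun i : ℕ => {w : Valuation M | Q - 1 / (i + 1) < w b} :=
    fun i j hij w (hw : Q - 1 / (j + 1) < w b) =>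
      show Q - 1 / (i + 1) < w b by linarith [Nat.one_div_le_one_div (α := ℝ) hij]
  rw [← hiInter, hanti.measure_iInter
    (fun i => (measurableSet_lt measurable_const (measurable_pi_apply b)).nullMeasurableSet)
    ⟨0, measure_ne_top _ _⟩]
  exact le_iInf fun i =>
    le_measure_lt_of_lt_quantileQ hkN hG (by linarith [Nat.one_div_pos_of_nat (α := ℝ) (n := i)])

theorem natCast_sub_one_le_measureReal_quantileQ_le_mul [IsProbabilityMeasure G]
    (hkN : k ≤ N) (hG : ∀ᵐ w ∂G, 0 ≤ w b) :
    ((k - 1 : ℕ) : ℝ) ≤ G.real {w | quantileQ M N k G b ≤ w b} * N := by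
  have h := (ENNReal.div_le_iff_le_mul (Or.inr (measure_ne_top _ _))
    (Or.inl (ENNReal.natCast_ne_top N))).1 (le_measure_quantileQ_le hkN hG)
  simpa only [ENNReal.toReal_mul, ENNReal.toReal_natCast, measureReal_def] using
    ENNReal.toReal_mono (ENNReal.mul_ne_top (measure_ne_top _ _) (ENNReal.natCast_ne_top N)) h

end Quantile

theorem integral_maxAlloc_avgMarginal_le_add_tails {M N k : ℕ} {Menu : Finset (Bundle M)}
    (hk : 1 ≤ k) (hkN : k ≤ N) {F : Measure (Fin N → Valuation M)} [IsProbabilityMeasure F]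
    (hF : ∀ᵐ v ∂F, ∀ n b, 0 ≤ v n b)
    (hG : ∀ b, Integrable (fun w : Valuation M => w b) (avgMarginal M N F))
    (hGnn : ∀ b, ∀ᵐ w ∂avgMarginal M N F, 0 ≤ w b) :
    ∫ w, maxAlloc M Menu w ∂avgMarginal M N F ≤ ∫ v, rankGuarantee M N Menu v k ∂F +
      ∑ b ∈ Menu, ∫ w in {w : Valuation M | quantileQ M N k (avgMarginal M N F) b ≤ w b},
        w b ∂avgMarginal M N F := by
  set G := avgMarginal M N F
  have := isProbabilityMeasure_avgMarginal (by omega) F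
  have hN : (0 : ℝ) < N := by exact_mod_cast (by omega : 0 < N)
  set Q := fun b => quantileQ M N k G b
  set tail := fun b => {w : Valuation M | Q b ≤ w b}
  refine le_of_mul_le_mul_left ?_ hN
  calc N * ∫ w, maxAlloc M Menu w ∂G
      ≤ N * ∫ v, rankGuarantee M N Menu v k ∂F + ∑ b ∈ Menu, ((k - 1 : ℕ) : ℝ) * Q b +
          N * ∫ w, ∑ b ∈ Menu, max (w b - Q b) 0 ∂G :=
        integral_maxAlloc_avgMarginal_le hk hkN hF hG fun _ => quantileQ_nonneg
    _ = N * ∫ v, rankGuarantee M N Menu v k ∂F + ∑ b ∈ Menu, (((k - 1 : ℕ) : ℝ) * Q b +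
          N * (∫ w in tail b, w b ∂G - G.real (tail b) * Q b)) := by
        rw [integral_finsetSum (f := fun b (w : Valuation M) => max (w b - Q b) 0) _
            fun b _ => ((hG b).sub (integrable_const _)).pos_part,
          Finset.mul_sum, add_assoc, ← Finset.sum_add_distrib]
        simp only [integral_max_sub_const_zero (measurable_pi_apply _) (hG _), tail]
    _ ≤ N * ∫ v, rankGuarantee M N Menu v k ∂F +
          ∑ b ∈ Menu, N * ∫ w in tail b, w b ∂G := by
        gcongr with b
        nlinarith [natCast_sub_one_le_measureReal_quantileQ_le_mul hkN (hGnn b),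
          quantileQ_nonneg (M := M) (N := N) (k := k) (G := G) (b := b)]
    _ = _ := by rw [mul_add, Finset.mul_sum]

theorem rank_guarantee_unbounded_support_general
    (M N : ℕ)
    (Menu : Finset (Bundle M))
    (k : ℕ) (hk2 : 2 ≤ k) (hkN : k ≤ N)
    (GG : Set (Measure (Valuation M))) (hGGne : GG.Nonempty)
    (hGGprob : ∀ G ∈ GG, IsProbabilityMeasure G ∧ G {w | IsValuationNN M w} = 1)
    (hGGint : ∀ G ∈ GG, ∀ b : Bundle M, Integrable (fun w : Valuation M => w b) G)
    (hbdd : BddAbove ((fun G : Measure (Valuation M) => ∑ b ∈ Menu,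
        ∫ w in {w : Valuation M | quantileQ M N k G b ≤ w b}, w b ∂G) '' GG)) :
    sInf ((fun F => ∫ v, rankGuarantee M N Menu v k ∂F) ''
        {F : Measure (Fin N → Valuation M) |
          (IsProbabilityMeasure F ∧ F {v | ∀ n, IsValuationNN M (v n)} = 1) ∧
          avgMarginal M N F ∈ GG}) ≥
      sInf ((fun F => Vsurplus M N Menu F) ''
        {F : Measure (Fin N → Valuation M) |
          (IsProbabilityMeasure F ∧ F {v | ∀ n, IsValuationNN M (v n)} = 1) ∧
          avgMarginal M N F ∈ GG})
        - sSup ((fun G : Measure (Valuation M) => ∑ b ∈ Menu,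
            ∫ w in {w : Valuation M | quantileQ M N k G b ≤ w b}, w b ∂G) '' GG) := by
  have hN : 0 < N := by omega
  obtain ⟨G₀, hG₀⟩ := hGGne
  refine le_csInf ⟨_, _, map_const_profile_mem_profileClass hN.ne' hGGprob hG₀, rfl⟩ ?_
  rintro _ ⟨F, ⟨⟨hFprob, hFsupp⟩, hFG⟩, rfl⟩
  obtain ⟨hGprob, hGsupp⟩ := hGGprob _ hFG
  refine (sub_le_sub (csInf_le (bddBelow_image_Vsurplus hN _)
    ⟨_, map_const_profile_mem_profileClass hN.ne' hGGprob hFG, rfl⟩)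
      (le_csSup hbdd ⟨_, hFG, rfl⟩)).trans ?_
  linarith [Vsurplus_map_const_profile_le (Menu := Menu) hN (hGGint _ hFG),
    integral_maxAlloc_avgMarginal_le_add_tails (Menu := Menu) (by omega) hkN
      (ae_nonneg_of_measure_forall_isValuationNN hFsupp) (hGGint _ hFG)
      (ae_nonneg_of_measure_isValuationNN hGsupp)]

/-- rank guarantee with unbounded valuations: with nonnegative (possibly
unbounded) valuations, `N ≥ |𝓜| + 1`, `2 ≤ k ≤ N`, `𝔾` a nonempty set of Borel
probability measures on valuations with finite means, and `𝔽 = {F : F̄ ∈ 𝔾}`,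
`inf_{F∈𝔽} E_F[R^k_𝓜(v)] ≥ inf_{F∈𝔽} V_𝓜(F) − sup_{G∈𝔾} ∑_{b∈𝓜} ∫_{v_b ≥ Q_b(G)} v_b dG`. -/
theorem rank_guarantee_unbounded_support
    (M N : ℕ) (hM : 1 ≤ M)
    (Menu : Finset (Bundle M)) (hMenu : IsMenu M Menu)
    (hN : Menu.card + 1 ≤ N) (k : ℕ) (hk2 : 2 ≤ k) (hkN : k ≤ N)
    (GG : Set (Measure (Valuation M))) (hGGne : GG.Nonempty)
    (hGGprob : ∀ G ∈ GG, IsProbabilityMeasure G ∧ G {w | IsValuationNN M w} = 1)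
    (hGGint : ∀ G ∈ GG, ∀ b : Bundle M, Integrable (fun w : Valuation M => w b) G)
    (hbdd : BddAbove ((fun G : Measure (Valuation M) => ∑ b ∈ Menu,
        ∫ w in {w : Valuation M | quantileQ M N k G b ≤ w b}, w b ∂G) '' GG)) :
    sInf ((fun F => ∫ v, rankGuarantee M N Menu v k ∂F) ''
        {F : Measure (Fin N → Valuation M) |
          (IsProbabilityMeasure F ∧ F {v | ∀ n, IsValuationNN M (v n)} = 1) ∧
          avgMarginal M N F ∈ GG}) ≥
      sInf ((fun F => Vsurplus M N Menu F) ''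
        {F : Measure (Fin N → Valuation M) |
          (IsProbabilityMeasure F ∧ F {v | ∀ n, IsValuationNN M (v n)} = 1) ∧
          avgMarginal M N F ∈ GG})
        - sSup ((fun G : Measure (Valuation M) => ∑ b ∈ Menu,
            ∫ w in {w : Valuation M | quantileQ M N k G b ≤ w b}, w b ∂G) '' GG) :=
  rank_guarantee_unbounded_support_general M N Menu k hk2 hkN GG hGGne hGGprob hGGint hbdd

end RankGuaranteedAuctions
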